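/- Let (N, A, L₁) and (N, B_i, L₂) for i = 0,…,n−1 be Hadamard triples with #A = n. Fix r ≥ 1 and set 𝐀 = A ⊕ NA ⊕ ⋯ ⊕ N^{r−1}A and 𝐋₁ = L₁ ⊕ NL₁ ⊕ ⋯ ⊕ N^{r−1}L₁. Then (N^r, 𝐀, 𝐋₁) is a Hadamard triple, and for any choice of indices i₁,…,i_r ∈ {0,…,n−1}, the triple (N^r, B_{i₁} ⊕ N B_{i₂} ⊕ ⋯ ⊕ N^{r−1} B_{i_r}, L₂ ⊕ N L₂ ⊕ ⋯ ⊕ N^{r−1} L₂) is a Hadamard triple. -/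

import Mathlib

open Matrix

/-- The matrix `(1/√m)(e^{2πi dℓ/N})_{d∈D,ℓ∈L}`. -/
noncomputable def hadMatrix (N : ℤ) (D L : Finset ℤ) : Matrix D L ℂ :=
  Matrix.of fun d l => ((Real.sqrt D.card : ℝ) : ℂ)⁻¹ *
    Complex.exp (((2 * Real.pi * ((d : ℤ) : ℝ) * ((l : ℤ) : ℝ) / (N : ℝ)) : ℝ) * Complex.I)

/-- `(N, D, L)` is a Hadamard triple: `#D = #L` and the matrix
`(1/√(#D))(e^{2πi dℓ/N})` is unitary. -/
def IsHadamardTriple (N : ℤ) (D L : Finset ℤ) : Prop :=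
  D.card = L.card ∧
  hadMatrix N D L * (hadMatrix N D L)ᴴ = 1 ∧ (hadMatrix N D L)ᴴ * hadMatrix N D L = 1

/-- The set `F 0 ⊕ N·F 1 ⊕ ⋯ ⊕ N^{r-1}·F (r-1)` of all sums `∑_j N^j a_j` with
`a_j ∈ F j`. -/
noncomputable def scaledSum (N : ℤ) (r : ℕ) (F : Fin r → Finset ℤ) : Finset ℤ :=
  (Fintype.piFinset F).image fun g => ∑ j : Fin r, N ^ (j : ℕ) * g j

/-! A Hadamard triple has distinct residues mod `N` in `D` (and, by symmetry, in `L`), so the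
expansion `g ↦ ∑ N^j g_j` is injective on `∏ D_j` and the cardinality condition holds. For two
distinct digit vectors `g ≠ g'`, let `j` be the first index where they differ; then the difference
of the expansions is `N^j (g_j - g'_j + N w)`. The exponential sum over the column set factors
over the digit positions, and the factor at position `r - 1 - j` is, up to integer phases, the
orthogonality sum of the rows `g_j ≠ g'_j` of `(N, D_j, L_j)`, hence zero. For a square matrix,
orthonormal rows already make it unitary. -/

open Finset
open scoped FourierTransform

theorem AddChar.map_sum_eq_prod {ι A M : Type*} [AddCommMonoid A] [CommMonoid M]
    (ψ : AddChar A M) (s : Finset ι) (f : ι → A) : ψ (∑ i ∈ s, f i) = ∏ i ∈ s, ψ (f i) :=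
  map_prod ψ.toMonoidHom (fun i => Multiplicative.ofAdd (f i)) s

theorem fourierChar_intCast (n : ℤ) : 𝐞 (n : ℝ) = 1 := Circle.exp_two_pi_mul_int n

theorem hadMatrix_apply (N : ℤ) (D L : Finset ℤ) (d : D) (l : L) :
    hadMatrix N D L d l = ((Real.sqrt #D : ℝ) : ℂ)⁻¹ * 𝐞 ((d : ℤ) * (l : ℤ) / N) := by
  rw [hadMatrix, of_apply, Real.fourierChar_apply]
  congr 4
  ring

theorem hadMatrix_mul_conjTranspose_apply (N : ℤ) (D L : Finset ℤ) (d d' : D) :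
    (hadMatrix N D L * (hadMatrix N D L)ᴴ) d d' =
      (#D : ℂ)⁻¹ * ∑ l ∈ L, (𝐞 (((d - d' : ℤ) : ℝ) * l / N) : ℂ) := by
  have hsqrt : ((Real.sqrt #D : ℝ) : ℂ)⁻¹ * ((Real.sqrt #D : ℝ) : ℂ)⁻¹ = (#D : ℂ)⁻¹ := by
    rw [← mul_inv, ← Complex.ofReal_mul, Real.mul_self_sqrt (Nat.cast_nonneg _),
      Complex.ofReal_natCast]
  simp only [mul_apply, conjTranspose_apply, hadMatrix_apply, star_mul', ← Circle.coe_inv_eq_conj,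
    ← AddChar.map_neg_eq_inv, Complex.star_def, Complex.conj_ofReal, map_inv₀, mul_sum]
  rw [← sum_coe_sort L]
  refine sum_congr rfl fun l _ => ?_
  rw [mul_mul_mul_comm, hsqrt, ← Circle.coe_mul, ← AddChar.map_add_eq_mul]
  push_cast
  ring_nf

theorem isHadamardTriple_iff {N : ℤ} {D L : Finset ℤ} :
    IsHadamardTriple N D L ↔ #D = #L ∧
      ∀ d ∈ D, ∀ d' ∈ D, d ≠ d' → ∑ l ∈ L, (𝐞 (((d - d' : ℤ) : ℝ) * l / N) : ℂ) = 0 := by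
  refine ⟨fun h => ⟨h.1, fun d hd d' hd' hne => ?_⟩, fun ⟨hcard, horth⟩ => ?_⟩
  · have hentry := congrFun (congrFun h.2.1 ⟨d, hd⟩) ⟨d', hd'⟩
    rw [hadMatrix_mul_conjTranspose_apply, one_apply_ne (by simpa using hne)] at hentry
    simpa [card_ne_zero_of_mem hd] using hentry
  have hmul : hadMatrix N D L * (hadMatrix N D L)ᴴ = 1 := by
    ext d d'
    rw [hadMatrix_mul_conjTranspose_apply]
    by_cases hdd : d = d'
    · subst hdd
      have hD : (#D : ℂ) ≠ 0 := Nat.cast_ne_zero.2 (card_ne_zero_of_mem d.2)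
      simp only [sub_self, Int.cast_zero, zero_mul, zero_div, AddChar.map_zero_eq_one,
        Circle.coe_one, sum_const, nsmul_one, one_apply_eq, ← hcard]
      exact inv_mul_cancel₀ hD
    · rw [one_apply_ne hdd, horth d d.2 d' d'.2 (Subtype.coe_ne_coe.2 hdd), mul_zero]
  exact ⟨hcard, hmul, (mul_eq_one_comm_of_equiv (equivOfCardEq hcard)).1 hmul⟩

theorem IsHadamardTriple.symm {N : ℤ} {D L : Finset ℤ} (h : IsHadamardTriple N D L) :
    IsHadamardTriple N L D := by
  have htr : hadMatrix N L D = (hadMatrix N D L)ᵀ := by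
    ext l d
    simp only [hadMatrix, of_apply, transpose_apply, h.1]
    ring_nf
  refine ⟨h.1.symm, ?_, ?_⟩
  · rw [htr, conjTranspose_transpose_eq_transpose_conjTranspose, ← transpose_mul, h.2.2,
      transpose_one]
  · rw [htr, conjTranspose_transpose_eq_transpose_conjTranspose, ← transpose_mul, h.2.1,
      transpose_one]

theorem IsHadamardTriple.eq_of_dvd_sub {N : ℤ} {D L : Finset ℤ} (h : IsHadamardTriple N D L)
    {d d' : ℤ} (hd : d ∈ D) (hd' : d' ∈ D) (hdvd : N ∣ d - d') : d = d' := by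
  by_contra hne
  obtain ⟨k, hk⟩ := hdvd
  have hN : (N : ℝ) ≠ 0 := by
    rintro hN
    exact hne (sub_eq_zero.1 (by simpa [Int.cast_eq_zero.1 hN] using hk))
  have hone : ∀ l ∈ L, (𝐞 (((d - d' : ℤ) : ℝ) * l / N) : ℂ) = 1 := fun l _ => by
    have harg : ((d - d' : ℤ) : ℝ) * l / N = ((k * l : ℤ) : ℝ) := by
      rw [hk]
      push_cast
      field_simp
    rw [harg, fourierChar_intCast, Circle.coe_one]
  have hsum := (isHadamardTriple_iff.1 h).2 d hd d' hd' hne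
  rw [sum_congr rfl hone, sum_const, nsmul_one, Nat.cast_eq_zero, ← h.1] at hsum
  exact card_ne_zero_of_mem hd hsum

def radixSum (N : ℤ) {r : ℕ} (g : Fin r → ℤ) : ℤ := ∑ j : Fin r, N ^ (j : ℕ) * g j

theorem scaledSum_eq_image (N : ℤ) (r : ℕ) (F : Fin r → Finset ℤ) :
    scaledSum N r F = (Fintype.piFinset F).image (radixSum N) := rfl

theorem exists_radixSum_sub_eq {N : ℤ} {r : ℕ} {g g' : Fin r → ℤ} (hne : g ≠ g') :
    ∃ j, g j ≠ g' j ∧ ∃ w : ℤ,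
      radixSum N g - radixSum N g' = N ^ (j : ℕ) * (g j - g' j + N * w) := by
  obtain ⟨j, hj, hmin⟩ :=
    wellFounded_lt.has_min {j | g j ≠ g' j} (Function.ne_iff.1 hne)
  have hlow : ∀ m < j, g m = g' m := fun m hm => not_not.1 fun h => hmin m h hm
  have hhigh : N ^ ((j : ℕ) + 1) ∣ ∑ m ∈ univ.erase j, N ^ (m : ℕ) * (g m - g' m) := by
    refine dvd_sum fun m hm => ?_
    rcases lt_or_gt_of_ne (ne_of_mem_erase hm) with hlt | hgt
    · simp [hlow m hlt]
    · exact (pow_dvd_pow N hgt).mul_right _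
  obtain ⟨w, hw⟩ := hhigh
  refine ⟨j, hj, w, ?_⟩
  rw [radixSum, radixSum, ← sum_sub_distrib, ← add_sum_erase _ _ (mem_univ j)]
  simp only [← mul_sub]
  rw [hw]
  ring

theorem injOn_radixSum {N : ℤ} (hN : N ≠ 0) {r : ℕ} {D : Fin r → Finset ℤ}
    (hD : ∀ j, ∀ d ∈ D j, ∀ d' ∈ D j, N ∣ d - d' → d = d') :
    Set.InjOn (radixSum N) (Fintype.piFinset D : Set (Fin r → ℤ)) := by
  intro g hg g' hg' heq
  by_contra hne
  obtain ⟨j, hj, w, hw⟩ := exists_radixSum_sub_eq (N := N) hne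
  rw [heq, sub_self, eq_comm, mul_eq_zero, or_iff_right (pow_ne_zero _ hN)] at hw
  rw [mem_coe, Fintype.mem_piFinset] at hg hg'
  exact hj (hD j _ (hg j) _ (hg' j) ⟨-w, by linarith⟩)

theorem card_scaledSum {N : ℤ} (hN : N ≠ 0) {r : ℕ} {D : Fin r → Finset ℤ}
    (hD : ∀ j, ∀ d ∈ D j, ∀ d' ∈ D j, N ∣ d - d' → d = d') :
    #(scaledSum N r D) = ∏ j, #(D j) := by
  rw [scaledSum_eq_image, card_image_of_injOn (injOn_radixSum hN hD), Fintype.card_piFinset]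

theorem sum_piFinset_fourierChar_radixSum_eq_zero {N : ℤ} (hN : N ≠ 0) {r : ℕ}
    (T : Fin r → Finset ℤ) {g g' : Fin r → ℤ} (hne : g ≠ g')
    (hT : ∀ j, g j ≠ g' j → ∑ t ∈ T j.rev, (𝐞 (((g j - g' j : ℤ) : ℝ) * t / N) : ℂ) = 0) :
    ∑ a ∈ Fintype.piFinset T,
      (𝐞 (((radixSum N g - radixSum N g' : ℤ) : ℝ) * radixSum N a / (N ^ r : ℤ)) : ℂ) = 0 := by
  obtain ⟨j, hj, w, hw⟩ := exists_radixSum_sub_eq (N := N) hne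
  generalize radixSum N g - radixSum N g' = Δ at hw ⊢
  have hfactor : ∑ a ∈ Fintype.piFinset T, (𝐞 ((Δ : ℝ) * radixSum N a / (N ^ r : ℤ)) : ℂ) =
      ∏ k : Fin r, ∑ t ∈ T k, (𝐞 ((Δ : ℝ) * (N ^ (k : ℕ) * t : ℤ) / (N ^ r : ℤ)) : ℂ) := by
    rw [prod_univ_sum]
    refine sum_congr rfl fun a _ => ?_
    have h : 𝐞 ((Δ : ℝ) * radixSum N a / (N ^ r : ℤ)) =
        ∏ k : Fin r, 𝐞 ((Δ : ℝ) * (N ^ (k : ℕ) * a k : ℤ) / (N ^ r : ℤ)) := by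
      rw [← AddChar.map_sum_eq_prod, radixSum, Int.cast_sum, mul_sum, sum_div]
    exact (congrArg Circle.coeHom h).trans (map_prod Circle.coeHom _ _)
  rw [hfactor]
  refine prod_eq_zero (mem_univ j.rev) ((sum_congr rfl fun t _ => ?_).trans (hT j hj))
  have hpow : ((N ^ r : ℤ) : ℝ) = (N : ℝ) ^ (j : ℕ) * (N : ℝ) ^ (j.rev : ℕ) * N := by
    rw [← pow_add, ← pow_succ, Int.cast_pow, Fin.val_rev]
    congr 1
    omega
  have hN' : (N : ℝ) ≠ 0 := Int.cast_ne_zero.2 hN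
  have harg : (Δ : ℝ) * (N ^ (j.rev : ℕ) * t : ℤ) / (N ^ r : ℤ) =
      ((g j - g' j : ℤ) : ℝ) * t / N + (w * t : ℤ) := by
    rw [hw, hpow]
    push_cast
    field_simp
  rw [harg, AddChar.map_add_eq_mul, fourierChar_intCast, mul_one]

theorem isHadamardTriple_scaledSum {N : ℤ} (hN : N ≠ 0) {r : ℕ} {D L : Fin r → Finset ℤ}
    (h : ∀ j, IsHadamardTriple N (D j) (L j)) :
    IsHadamardTriple (N ^ r) (scaledSum N r D) (scaledSum N r fun k => L k.rev) := by
  have hD (j : Fin r) : ∀ d ∈ D j, ∀ d' ∈ D j, N ∣ d - d' → d = d' :=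
    fun _ hd _ hd' => (h j).eq_of_dvd_sub hd hd'
  have hL (k : Fin r) : ∀ l ∈ L k.rev, ∀ l' ∈ L k.rev, N ∣ l - l' → l = l' :=
    fun _ hl _ hl' => (h k.rev).symm.eq_of_dvd_sub hl hl'
  rw [isHadamardTriple_iff]
  refine ⟨?_, fun x hx x' hx' hne => ?_⟩
  · rw [card_scaledSum hN hD, card_scaledSum hN hL]
    exact Fintype.prod_equiv Fin.revPerm _ _ fun j => by simp [(h j).1]
  rw [scaledSum_eq_image] at hx hx' ⊢
  obtain ⟨g, hg, rfl⟩ := mem_image.1 hx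
  obtain ⟨g', hg', rfl⟩ := mem_image.1 hx'
  rw [sum_image (injOn_radixSum hN hL)]
  refine sum_piFinset_fourierChar_radixSum_eq_zero hN _ (fun hgg => hne (hgg ▸ rfl)) fun j hj => ?_
  rw [Fintype.mem_piFinset] at hg hg'
  rw [Fin.rev_rev]
  exact (isHadamardTriple_iff.1 (h j)).2 _ (hg j) _ (hg' j) hj

theorem stmt_2_general (N : ℤ) (hN : 2 ≤ N) (n : ℕ) (A L₁ L₂ : Finset ℤ) (B : Fin n → Finset ℤ)
    (hAL : IsHadamardTriple N A L₁)
    (hB : ∀ i : Fin n, IsHadamardTriple N (B i) L₂)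
    (r : ℕ) :
    IsHadamardTriple (N ^ r) (scaledSum N r fun _ => A) (scaledSum N r fun _ => L₁) ∧
    ∀ idx : Fin r → Fin n,
      IsHadamardTriple (N ^ r) (scaledSum N r fun j => B (idx j))
        (scaledSum N r fun _ => L₂) := by
  have hN0 : N ≠ 0 := by omega
  exact ⟨isHadamardTriple_scaledSum (L := fun _ => L₁) hN0 fun _ => hAL,
    fun idx => isHadamardTriple_scaledSum (L := fun _ => L₂) hN0 fun j => hB (idx j)⟩

theorem stmt_2 (N : ℤ) (hN : 2 ≤ N) (n : ℕ) (A L₁ L₂ : Finset ℤ) (B : Fin n → Finset ℤ)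
    (hA : A.card = n)
    (hAL : IsHadamardTriple N A L₁)
    (hB : ∀ i : Fin n, IsHadamardTriple N (B i) L₂)
    (r : ℕ) (hr : 1 ≤ r) :
    IsHadamardTriple (N ^ r) (scaledSum N r fun _ => A) (scaledSum N r fun _ => L₁) ∧
    ∀ idx : Fin r → Fin n,
      IsHadamardTriple (N ^ r) (scaledSum N r fun j => B (idx j))
        (scaledSum N r fun _ => L₂) :=
  stmt_2_general N hN n A L₁ L₂ B hAL hB r
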